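/- arXiv:2111.00832 — 2 statements merged into one kernel-verified Lean document; each statement's English description precedes it below -/
import Mathlib

section
/- Let f: ℕ₊ → (0,∞) satisfy f(k) ≤ C k^β for all k ∈ ℕ₊, for some constants C > 0 and β < 1. Then the function λ ↦ ρ_f(λ) = Σ_{l=1}^{∞} ∏_{i=1}^{l} f(i)/(λ + f(i)) is finite and strictly decreasing on (0,∞), tends to +∞ as λ ↓ 0 and to 0 as λ → ∞; consequently there exists a unique λ* ∈ (0,∞) with ρ_f(λ*) = 1 (the Malthusian parameter of f). -/
/-- The series `ρ_f(λ) = Σ_{l=1}^∞ ∏_{i=1}^l f(i)/(λ + f(i))`. -/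
noncomputable def rhoF (f : ℕ+ → ℝ) (lam : ℝ) : ℝ :=
  ∑' l : ℕ+, ∏ i ∈ Finset.Icc 1 l, f i / (lam + f i)

/-!
Every term `∏_{i ≤ l} f(i)/(λ + f(i))` of `ρ_f(λ)` decreases strictly in `λ`, equals `1` at
`λ = 0` and tends to `0` as `λ → ∞`. Since `f(i) ≤ C l^γ` for `i ≤ l`, where `γ = max β 0 < 1`,
the `l`-th term is at most `(1 - λ/(λ + C l^γ))^l ≤ exp(-λ l^{1-γ}/(λ + C))`, which is summable.
Domination by the terms at a fixed `λ₀` gives continuity on `(0, ∞)` and the limit `0` at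
infinity; finite partial sums force the limit `+∞` at `0`; the intermediate value theorem and
strict monotonicity then give `λ*`.
-/

open Filter Finset Real Topology Asymptotics

lemma summable_exp_neg_mul_rpow {c ε : ℝ} (hc : 0 < c) (hε : 0 < ε) :
    Summable fun n : ℕ => exp (-(c * (n : ℝ) ^ ε)) := by
  have hlim : Tendsto (fun x : ℝ => x ^ (2 / ε * ε) * exp (-(c * x ^ ε))) atTop (𝓝 0) := by
    refine ((tendsto_rpow_mul_exp_neg_mul_atTop_nhds_zero (2 / ε) c hc).comp
      (tendsto_rpow_atTop hε)).congr' ?_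
    filter_upwards [eventually_ge_atTop 0] with x hx
    rw [Function.comp_apply, ← rpow_mul hx, mul_comm ε, neg_mul]
  rw [div_mul_cancel₀ _ hε.ne'] at hlim
  refine summable_of_isBigO_nat (summable_nat_rpow.2 (by norm_num : (-2 : ℝ) < -1)) ?_
  refine (((hlim.comp tendsto_natCast_atTop_atTop).isBigO_one ℝ).mul
    (isBigO_refl (fun n : ℕ => (n : ℝ) ^ (-2 : ℝ)) atTop)).congr' ?_ (by simp)
  filter_upwards [eventually_ge_atTop 1] with n hn
  have hn0 : (0 : ℝ) < n := by exact_mod_cast hn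
  rw [Function.comp_apply, mul_comm, ← mul_assoc, ← rpow_add hn0]
  norm_num

noncomputable def rhoTerm (f : ℕ+ → ℝ) (lam : ℝ) (l : ℕ+) : ℝ :=
  ∏ i ∈ Icc 1 l, f i / (lam + f i)

section

variable {f : ℕ+ → ℝ}

lemma rhoTerm_pos (hf : ∀ k, 0 < f k) {lam : ℝ} (hlam : 0 ≤ lam) (l : ℕ+) :
    0 < rhoTerm f lam l :=
  prod_pos fun i _ => div_pos (hf i) (by linarith [hf i])

lemma rhoTerm_zero (hf : ∀ k, 0 < f k) (l : ℕ+) : rhoTerm f 0 l = 1 :=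
  prod_eq_one fun i _ => by rw [zero_add, div_self (hf i).ne']

lemma antitoneOn_rhoTerm (hf : ∀ k, 0 < f k) (l : ℕ+) :
    AntitoneOn (rhoTerm f · l) (Set.Ici 0) := fun lam hlam mu _ h =>
  prod_le_prod (fun i _ => (div_pos (hf i) (by linarith [hf i, hlam.out])).le)
    fun i _ => div_le_div_of_nonneg_left (hf i).le (by linarith [hf i, hlam.out]) (by linarith)

lemma strictAntiOn_rhoTerm (hf : ∀ k, 0 < f k) (l : ℕ+) :
    StrictAntiOn (rhoTerm f · l) (Set.Ici 0) := fun lam hlam mu _ h =>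
  prod_lt_prod_of_nonempty (fun i _ => div_pos (hf i) (by linarith [hf i, hlam.out, h]))
    (fun i _ => div_lt_div_of_pos_left (hf i) (by linarith [hf i, hlam.out]) (by linarith))
    (nonempty_Icc.2 one_le)

lemma continuousOn_rhoTerm (hf : ∀ k, 0 < f k) (l : ℕ+) :
    ContinuousOn (rhoTerm f · l) (Set.Ici 0) :=
  continuousOn_finsetProd _ fun i _ => continuousOn_const.div
    (continuousOn_id.add continuousOn_const) fun x hx => by linarith [hf i, hx.out]

lemma tendsto_rhoTerm_atTop (l : ℕ+) : Tendsto (rhoTerm f · l) atTop (𝓝 0) := by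
  have := tendsto_finsetProd (Icc 1 l) fun i _ =>
    (tendsto_const_nhds (x := f i)).div_atTop (tendsto_atTop_add_const_right _ (f i) tendsto_id)
  rwa [prod_eq_zero (mem_Icc.2 ⟨le_rfl, one_le⟩) rfl] at this

lemma rhoTerm_le_exp (hf : ∀ k, 0 < f k) {lam M : ℝ} (hlam : 0 ≤ lam) {l : ℕ+}
    (hM : ∀ i ∈ Icc 1 l, f i ≤ M) : rhoTerm f lam l ≤ exp (-(lam / (lam + M) * l)) := by
  have hM0 : 0 < M := (hf 1).trans_le (hM 1 (mem_Icc.2 ⟨le_rfl, one_le⟩))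
  calc rhoTerm f lam l ≤ ∏ _i ∈ Icc 1 l, exp (-(lam / (lam + M))) := by
        refine prod_le_prod (fun i _ => (div_pos (hf i) (by linarith [hf i])).le) fun i hi => ?_
        calc f i / (lam + f i) = 1 - lam / (lam + f i) := by
              field_simp [(by linarith [hf i] : lam + f i ≠ 0)]; ring
          _ ≤ 1 - lam / (lam + M) := by
              gcongr
              exacts [by linarith [hf i], hM i hi]
          _ ≤ exp (-(lam / (lam + M))) := one_sub_le_exp_neg _
    _ = exp (-(lam / (lam + M) * l)) := by
        rw [prod_const, PNat.card_Icc, ← exp_nat_mul]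
        simp [mul_comm]

lemma summable_rhoTerm (hf : ∀ k, 0 < f k) {C β : ℝ} (hC : 0 < C) (hβ : β < 1)
    (hbound : ∀ k : ℕ+, f k ≤ C * (k : ℝ) ^ β) {lam : ℝ} (hlam : 0 < lam) :
    Summable (rhoTerm f lam) := by
  set γ := max β 0
  have hγ : γ < 1 := max_lt hβ one_pos
  have hdom : Summable fun l : ℕ+ => exp (-(lam / (lam + C) * (l : ℝ) ^ (1 - γ))) :=
    (summable_exp_neg_mul_rpow (by positivity) (by linarith)).comp_injective
      PNat.coe_injective
  refine hdom.of_nonneg_of_le (fun l => (rhoTerm_pos hf hlam.le l).le) fun l => ?_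
  have hl : (1 : ℝ) ≤ l := by exact_mod_cast one_le
  have hlγ : 1 ≤ (l : ℝ) ^ γ := one_le_rpow hl (le_max_right _ _)
  have hf_le : ∀ i ∈ Icc 1 l, f i ≤ C * (l : ℝ) ^ γ := fun i hi => by
    have hi1 : (1 : ℝ) ≤ i := by exact_mod_cast one_le
    calc f i ≤ C * (i : ℝ) ^ β := hbound i
      _ ≤ C * (i : ℝ) ^ γ := by gcongr; exact le_max_left _ _
      _ ≤ C * (l : ℝ) ^ γ := by
        gcongr
        exact_mod_cast (mem_Icc.1 hi).2
  refine (rhoTerm_le_exp hf hlam.le hf_le).trans (exp_le_exp.2 (neg_le_neg ?_))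
  calc lam / (lam + C) * (l : ℝ) ^ (1 - γ) = lam * l / ((lam + C) * (l : ℝ) ^ γ) := by
        rw [rpow_sub (by linarith), rpow_one]
        field_simp
    _ ≤ lam * l / (lam + C * (l : ℝ) ^ γ) := by
        gcongr
        nlinarith
    _ = lam / (lam + C * (l : ℝ) ^ γ) * l := by ring

lemma strictAntiOn_rhoF (hf : ∀ k, 0 < f k)
    (hsum : ∀ lam : ℝ, 0 < lam → Summable (rhoTerm f lam)) :
    StrictAntiOn (rhoF f) (Set.Ioi 0) := fun lam hlam mu hmu h =>
  (hsum mu hmu).tsum_lt_tsum (fun l => antitoneOn_rhoTerm hf l hlam.out.le hmu.out.le h.le)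
    (strictAntiOn_rhoTerm hf 1 hlam.out.le hmu.out.le h) (hsum lam hlam)

lemma continuousOn_rhoF (hf : ∀ k, 0 < f k)
    (hsum : ∀ lam : ℝ, 0 < lam → Summable (rhoTerm f lam)) :
    ContinuousOn (rhoF f) (Set.Ioi 0) := by
  have hIci : ∀ a, 0 < a → ContinuousOn (rhoF f) (Set.Ici a) := fun a ha =>
    continuousOn_tsum (fun l => (continuousOn_rhoTerm hf l).mono (Set.Ici_subset_Ici.2 ha.le))
      (hsum a ha) fun l x hx => by
        change ‖rhoTerm f x l‖ ≤ rhoTerm f a l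
        rw [norm_of_nonneg (rhoTerm_pos hf (ha.le.trans hx) l).le]
        exact antitoneOn_rhoTerm hf l ha.le (ha.le.trans hx) hx
  exact fun x hx => ((hIci (x / 2) (half_pos hx)).continuousAt
    (Ici_mem_nhds (half_lt_self hx))).continuousWithinAt

lemma tendsto_rhoF_atTop (hf : ∀ k, 0 < f k)
    (hsum : ∀ lam : ℝ, 0 < lam → Summable (rhoTerm f lam)) :
    Tendsto (rhoF f) atTop (𝓝 0) := by
  have hdom : ∀ᶠ x in atTop, ∀ l, ‖rhoTerm f x l‖ ≤ rhoTerm f 1 l := by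
    filter_upwards [eventually_ge_atTop 1] with x hx l
    rw [norm_of_nonneg (rhoTerm_pos hf (by linarith) l).le]
    exact antitoneOn_rhoTerm hf l (Set.mem_Ici.2 zero_le_one) (Set.mem_Ici.2 (by linarith)) hx
  have := tendsto_tsum_of_dominated_convergence (hsum 1 one_pos) tendsto_rhoTerm_atTop hdom
  rwa [tsum_zero] at this

lemma tendsto_rhoF_nhdsGT_zero (hf : ∀ k, 0 < f k)
    (hsum : ∀ lam : ℝ, 0 < lam → Summable (rhoTerm f lam)) :
    Tendsto (rhoF f) (𝓝[>] 0) atTop := by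
  refine tendsto_atTop.2 fun M => ?_
  obtain ⟨n, hn⟩ := exists_nat_gt M
  have hpartial : Tendsto (fun x => ∑ l ∈ Icc 1 n.succPNat, rhoTerm f x l) (𝓝[>] 0)
      (𝓝 (n + 1)) := by
    have hcont := continuousOn_finsetSum (Icc 1 n.succPNat) fun l _ => continuousOn_rhoTerm hf l
    have := (hcont.continuousWithinAt Set.self_mem_Ici).tendsto.mono_left
      (nhdsWithin_mono _ Set.Ioi_subset_Ici_self)
    simpa [rhoTerm_zero hf] using this
  filter_upwards [hpartial.eventually (eventually_ge_nhds (by linarith : M < n + 1)),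
    self_mem_nhdsWithin] with x hx hx0
  exact hx.trans (Summable.sum_le_tsum _ (fun l _ => (rhoTerm_pos hf hx0.out.le l).le) (hsum x hx0))

lemma existsUnique_rhoF_eq_one (hf : ∀ k, 0 < f k)
    (hsum : ∀ lam : ℝ, 0 < lam → Summable (rhoTerm f lam)) :
    ∃! lam : ℝ, 0 < lam ∧ rhoF f lam = 1 := by
  obtain ⟨a, ha1, ha0⟩ :=
    (((tendsto_rhoF_nhdsGT_zero hf hsum).eventually_ge_atTop 1).and self_mem_nhdsWithin).exists
  obtain ⟨b, hb1, hab⟩ :=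
    (((tendsto_rhoF_atTop hf hsum).eventually_le_const one_pos).and (eventually_ge_atTop a)).exists
  obtain ⟨lam, hlam, hlam1⟩ := intermediate_value_Icc' hab
    ((continuousOn_rhoF hf hsum).mono fun x hx => lt_of_lt_of_le ha0 hx.1) ⟨hb1, ha1⟩
  have hlam0 : 0 < lam := lt_of_lt_of_le ha0 hlam.1
  exact ⟨lam, ⟨hlam0, hlam1⟩, fun mu hmu =>
    (strictAntiOn_rhoF hf hsum).injOn hmu.1 hlam0 (hmu.2.trans hlam1.symm)⟩

end

/-- If `f : ℕ₊ → (0,∞)` satisfies `f k ≤ C k^β` for all `k`, for some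
`C > 0` and `β < 1`, then `λ ↦ ρ_f(λ)` is finite (the series converges) and strictly
decreasing on `(0,∞)`, tends to `+∞` as `λ ↓ 0` and to `0` as `λ → ∞`; consequently
there exists a unique `λ* ∈ (0,∞)` with `ρ_f(λ*) = 1` (the Malthusian parameter). -/
theorem stmt_4 (f : ℕ+ → ℝ) (hf : ∀ k, 0 < f k)
    (C β : ℝ) (hC : 0 < C) (hβ : β < 1)
    (hbound : ∀ k : ℕ+, f k ≤ C * (k : ℝ) ^ β) :
    (∀ lam : ℝ, 0 < lam →
        Summable (fun l : ℕ+ => ∏ i ∈ Finset.Icc 1 l, f i / (lam + f i))) ∧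
    StrictAntiOn (rhoF f) (Set.Ioi 0) ∧
    Filter.Tendsto (rhoF f) (nhdsWithin 0 (Set.Ioi 0)) Filter.atTop ∧
    Filter.Tendsto (rhoF f) Filter.atTop (nhds 0) ∧
    (∃! lam : ℝ, 0 < lam ∧ rhoF f lam = 1) := by
  have hsum : ∀ lam : ℝ, 0 < lam → Summable (rhoTerm f lam) :=
    fun _ hlam => summable_rhoTerm hf hC hβ hbound hlam
  exact ⟨hsum, strictAntiOn_rhoF hf hsum, tendsto_rhoF_nhdsGT_zero hf hsum,
    tendsto_rhoF_atTop hf hsum, existsUnique_rhoF_eq_one hf hsum⟩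
end

section
/- Let α > −1 and define p_k = (2 + α) Γ(k + α) Γ(3 + 2α) / (Γ(k + 3 + 2α) Γ(1 + α)) for k ∈ ℕ₊. Then for every k ∈ ℕ₊, the series Σ_{l>k} p_l (l + α) converges and Σ_{l>k} p_l (l + α) = ((k + α)(k + 1 + α)/(1 + α)) · p_k. -/
/-!
With `T k = (k + α)(k + 1 + α) p_k / (1 + α)`, the recursion
`(k + 3 + 2α) p_{k+1} = (k + α) p_k` gives `T k - T (k + 1) = p_{k+1} (k + 1 + α)`, so the series
telescopes to `T k - lim T`. The limit vanishes because `T k` is a constant times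
`Γ(k + 2 + α) / Γ(k + 2 + α + (1 + α))` and `1 + α > 0`; that Gamma ratio tends to zero by the
log-convexity of `Γ`.
-/

open Filter Real Topology

namespace Real

/-- Log-convexity of `Γ`, with `x = s (x + s - 1) + (1 - s) (x + s)`. -/
theorem Gamma_le_Gamma_add_mul_rpow {x s : ℝ} (hs : 0 < s) (hs1 : s < 1) (hxs : 1 < x + s) :
    Gamma x ≤ Gamma (x + s) * (x + s - 1) ^ (-s) := by
  have hpos : 0 < x + s - 1 := by linarith
  have hrec : Gamma (x + s) = (x + s - 1) * Gamma (x + s - 1) := by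
    simpa using Gamma_add_one hpos.ne'
  have hconv := Gamma_mul_add_mul_le_rpow_Gamma_mul_rpow_Gamma (by linarith : 0 < x + s) hpos
    (sub_pos.2 hs1) hs (sub_add_cancel 1 s)
  rw [show (1 - s) * (x + s) + s * (x + s - 1) = x by ring] at hconv
  calc Gamma x ≤ Gamma (x + s) ^ (1 - s) * Gamma (x + s - 1) ^ s := hconv
    _ = Gamma (x + s) ^ (1 - s) * (Gamma (x + s) ^ s * (x + s - 1) ^ (-s)) := by
      congr 1
      have := (rpow_pos_of_pos hpos s).ne'
      rw [hrec, mul_rpow hpos.le (Gamma_pos_of_pos hpos).le, rpow_neg hpos.le]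
      field_simp
    _ = Gamma (x + s) * (x + s - 1) ^ (-s) := by
      rw [← mul_assoc, ← rpow_add (Gamma_pos_of_pos (by linarith)), sub_add_cancel, rpow_one]

theorem tendsto_Gamma_div_Gamma_add {s : ℝ} (hs : 0 < s) :
    Tendsto (fun x => Gamma x / Gamma (x + s)) atTop (𝓝 0) := by
  -- `Γ` is increasing on `[2, ∞)`, so a shift `t < 1` with `t ≤ s` gives a smaller ratio.
  set t := min s (1 / 2)
  have ht : 0 < t := lt_min hs one_half_pos
  have hbound : Tendsto (fun x : ℝ => (x + t - 1) ^ (-t)) atTop (𝓝 0) :=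
    (tendsto_rpow_neg_atTop ht).comp
      ((tendsto_atTop_add_const_right _ (t - 1) tendsto_id).congr fun x => by simp; ring)
  refine tendsto_of_tendsto_of_tendsto_of_le_of_le' tendsto_const_nhds hbound ?_ ?_
  all_goals filter_upwards [eventually_ge_atTop (2 : ℝ)] with x hx
  · exact div_nonneg (Gamma_pos_of_pos (by linarith)).le (Gamma_pos_of_pos (by linarith)).le
  · have hmono : Gamma (x + t) ≤ Gamma (x + s) :=
      Gamma_strictMonoOn_Ici.monotoneOn (by simp; linarith) (by simp; linarith)
        (by simp [t])
    rw [div_le_iff₀ (Gamma_pos_of_pos (by linarith))]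
    calc Gamma x ≤ Gamma (x + t) * (x + t - 1) ^ (-t) :=
          Gamma_le_Gamma_add_mul_rpow ht ((min_le_right _ _).trans_lt (by norm_num))
            (by linarith)
      _ ≤ (x + t - 1) ^ (-t) * Gamma (x + s) := by
          rw [mul_comm]
          exact mul_le_mul_of_nonneg_left hmono (rpow_nonneg (by linarith) _)

end Real

theorem Antitone.hasSum_sub_succ {T : ℕ → ℝ} {l : ℝ} (hT : Antitone T)
    (hl : Tendsto T atTop (𝓝 l)) : HasSum (fun n => T n - T (n + 1)) (T 0 - l) := by
  rw [hasSum_iff_tendsto_nat_of_nonneg fun n => sub_nonneg.2 (hT n.le_succ)]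
  simp_rw [Finset.sum_range_sub']
  exact tendsto_const_nhds.sub hl

section DegreeDistribution

variable {α : ℝ} {p : ℕ → ℝ}

noncomputable def degreeTail (α : ℝ) (p : ℕ → ℝ) (k : ℕ) : ℝ :=
  ((k : ℝ) + α) * ((k : ℝ) + 1 + α) / (1 + α) * p k

theorem degreeTail_sub_succ (hα : 1 + α ≠ 0) {k : ℕ}
    (hrec : ((k : ℝ) + 3 + 2 * α) * p (k + 1) = ((k : ℝ) + α) * p k) :
    degreeTail α p k - degreeTail α p (k + 1) = p (k + 1) * (((k + 1 : ℕ) : ℝ) + α) := by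
  unfold degreeTail
  push_cast
  field_simp
  linear_combination -((k : ℝ) + 1 + α) * hrec

variable (hα : -1 < α)
  (hp : ∀ k, 1 ≤ k →
    p k = (2 + α) * Gamma ((k : ℝ) + α) * Gamma (3 + 2 * α)
      / (Gamma ((k : ℝ) + 3 + 2 * α) * Gamma (1 + α)))
include hα hp

theorem degreeDistribution_pos {k : ℕ} (hk : 1 ≤ k) : 0 < p k := by
  have : (1 : ℝ) ≤ k := by exact_mod_cast hk
  rw [hp k hk]
  have := Gamma_pos_of_pos (by linarith : 0 < (k : ℝ) + α)
  have := Gamma_pos_of_pos (by linarith : 0 < (k : ℝ) + 3 + 2 * α)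
  have := Gamma_pos_of_pos (by linarith : 0 < 3 + 2 * α)
  have := Gamma_pos_of_pos (by linarith : 0 < 1 + α)
  have : 0 < 2 + α := by linarith
  positivity

theorem degreeDistribution_succ {k : ℕ} (hk : 1 ≤ k) :
    ((k : ℝ) + 3 + 2 * α) * p (k + 1) = ((k : ℝ) + α) * p k := by
  have : (1 : ℝ) ≤ k := by exact_mod_cast hk
  rw [hp (k + 1) (by omega), hp k hk]
  push_cast
  rw [show (k : ℝ) + 1 + α = (k + α) + 1 by ring, Gamma_add_one (by linarith),
    show (k : ℝ) + 1 + 3 + 2 * α = (k + 3 + 2 * α) + 1 by ring, Gamma_add_one (by linarith)]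
  have := (Gamma_pos_of_pos (by linarith : 0 < (k : ℝ) + 3 + 2 * α)).ne'
  have := (Gamma_pos_of_pos (by linarith : 0 < 1 + α)).ne'
  have : (k : ℝ) + 3 + 2 * α ≠ 0 := by linarith
  field_simp

theorem tendsto_degreeTail_zero : Tendsto (degreeTail α p) atTop (𝓝 0) := by
  set C := (2 + α) * Gamma (3 + 2 * α) / (Gamma (1 + α) * (1 + α))
  have hshift : Tendsto (fun k : ℕ => (k : ℝ) + 2 + α) atTop atTop :=
    (tendsto_atTop_add_const_right _ (2 + α) tendsto_natCast_atTop_atTop).congr fun k => by ring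
  have hlim := ((tendsto_Gamma_div_Gamma_add (by linarith : 0 < 1 + α)).comp hshift).const_mul C
  rw [mul_zero] at hlim
  refine hlim.congr' ?_
  filter_upwards [eventually_ge_atTop 1] with k hk
  have : (1 : ℝ) ≤ k := by exact_mod_cast hk
  have hΓ : Gamma ((k : ℝ) + 2 + α)
      = ((k : ℝ) + 1 + α) * (((k : ℝ) + α) * Gamma ((k : ℝ) + α)) := by
    rw [show (k : ℝ) + 2 + α = (k + α) + 1 + 1 by ring, Gamma_add_one (by linarith),
      Gamma_add_one (by linarith)]
    ring
  simp only [Function.comp_apply, degreeTail, hp k hk, C, hΓ]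
  rw [show (k : ℝ) + 2 + α + (1 + α) = k + 3 + 2 * α by ring]
  have := (Gamma_pos_of_pos (by linarith : 0 < (k : ℝ) + 3 + 2 * α)).ne'
  have := (Gamma_pos_of_pos (by linarith : 0 < 1 + α)).ne'
  have : 1 + α ≠ 0 := by linarith
  field_simp

theorem hasSum_degreeTail {k : ℕ} (hk : 1 ≤ k) :
    HasSum (fun l : ℕ => p (k + 1 + l) * (((k + 1 + l : ℕ) : ℝ) + α))
      (degreeTail α p k) := by
  have hstep (l : ℕ) : degreeTail α p (k + l) - degreeTail α p (k + (l + 1))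
      = p (k + 1 + l) * (((k + 1 + l : ℕ) : ℝ) + α) := by
    rw [Nat.add_right_comm k 1 l, ← add_assoc]
    exact degreeTail_sub_succ (by linarith) (degreeDistribution_succ hα hp (by omega))
  have hanti : Antitone fun l => degreeTail α p (k + l) := by
    refine antitone_nat_of_succ_le fun l => sub_nonneg.1 ?_
    rw [hstep]
    have : (1 : ℝ) ≤ k := by exact_mod_cast hk
    exact mul_nonneg (degreeDistribution_pos hα hp (by omega)).le (by push_cast; linarith)
  have hlim : Tendsto (fun l => degreeTail α p (k + l)) atTop (𝓝 0) :=
    ((tendsto_degreeTail_zero hα hp).comp (tendsto_add_atTop_nat k)).congr fun l => by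
      simp [add_comm]
  simpa only [add_zero, sub_zero, hstep] using hanti.hasSum_sub_succ hlim

end DegreeDistribution

/-- For the limiting degree distribution
`p_k = (2+α) Γ(k+α) Γ(3+2α) / (Γ(k+3+2α) Γ(1+α))` of the affine preferential attachment
model, for every `k ≥ 1` the series `Σ_{l>k} p_l (l+α)` converges and equals
`((k+α)(k+1+α)/(1+α)) p_k`. -/
theorem stmt_17 (α : ℝ) (hα : -1 < α) (p : ℕ → ℝ)
    (hp : ∀ k, 1 ≤ k →
      p k = (2 + α) * Real.Gamma ((k : ℝ) + α) * Real.Gamma (3 + 2 * α)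
        / (Real.Gamma ((k : ℝ) + 3 + 2 * α) * Real.Gamma (1 + α))) :
    ∀ k, 1 ≤ k →
      Summable (fun l : ℕ => p (k + 1 + l) * (((k + 1 + l : ℕ) : ℝ) + α)) ∧
      (∑' l : ℕ, p (k + 1 + l) * (((k + 1 + l : ℕ) : ℝ) + α))
        = (((k : ℝ) + α) * ((k : ℝ) + 1 + α) / (1 + α)) * p k := by
  intro k hk
  have h := hasSum_degreeTail hα hp hk
  exact ⟨h.summable, h.tsum_eq⟩
end
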